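/- arXiv:2003.05649 — 4 statements merged into one kernel-verified Lean document; each statement's English description precedes it below -/
import Mathlib

section
/- Let G : ℝ^d → ℝ be L-Lipschitz-smooth. On a probability space, let ℱ be a sub-σ-algebra, let w be an ℱ-measurable random vector, let y be an ℱ-measurable random variable taking values in the positive integers, and let d be a random vector satisfying almost surely ∇G(w)ᵀ E[d | ℱ] ≥ μ ‖∇G(w)‖² and E[‖d‖² | ℱ] ≤ M / y + M_G ‖∇G(w)‖², for constants μ > 0, M ≥ 0, M_G > 0. If 0 < α < μ/(L·M_G), then almost surely E[G(w − α d) − G(w) | ℱ] ≤ −(α μ / 2) ‖∇G(w)‖² + α² L M / (2 y). -/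
/-!
For a function with `L`-Lipschitz gradient, `G (u + h)` differs from its linearization
`G u + ⟪∇G u, h⟫` by at most `L / 2 * ‖h‖ ^ 2`. With `u = w` and `h = -α d` this sandwiches
`α ⟪∇G(w), d⟫` between integrable functions, so it is integrable and, `∇G(w)` being
`𝒢`-measurable, the pull-out property turns its conditional expectation into
`α ⟪∇G(w), E[d | 𝒢]⟫`. Conditioning the upper half of the bound then gives
`E[G(w - α d) - G(w) | 𝒢] ≤ -α ⟪∇G(w), E[d | 𝒢]⟫ + α² L / 2 * E[‖d‖² | 𝒢]`, and the two
moment bounds together with `α L M_G ≤ μ` finish the estimate.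
-/

open MeasureTheory RealInnerProductSpace

theorem norm_image_add_sub_sub_fderiv_le {E F : Type*} [NormedAddCommGroup E] [NormedSpace ℝ E]
    [NormedAddCommGroup F] [NormedSpace ℝ F] {f : E → F} {L : ℝ} (hf : Differentiable ℝ f)
    (hlip : ∀ x y, ‖fderiv ℝ f x - fderiv ℝ f y‖ ≤ L * ‖x - y‖) (x h : E) :
    ‖f (x + h) - f x - fderiv ℝ f x h‖ ≤ L / 2 * ‖h‖ ^ 2 := by
  set φ : ℝ → F := fun t => f (x + t • h) - f x - t • fderiv ℝ f x h
  have hφ : ∀ t, HasDerivAt φ (fderiv ℝ f (x + t • h) h - fderiv ℝ f x h) t := by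
    intro t
    have hline : HasDerivAt (fun s : ℝ => x + s • h) h t := by
      simpa using ((hasDerivAt_id t).smul_const h).const_add x
    simpa using (((hf _).hasFDerivAt.comp_hasDerivAt t hline).sub_const (f x)).fun_sub
      ((hasDerivAt_id t).smul_const (fderiv ℝ f x h))
  have hB : ∀ t, HasDerivAt (fun s => L / 2 * ‖h‖ ^ 2 * s ^ 2) (L * ‖h‖ ^ 2 * t) t := fun t =>
    ((hasDerivAt_pow 2 t).const_mul (L / 2 * ‖h‖ ^ 2)).congr_deriv (by push_cast; ring)
  have hφ_le : ∀ t ∈ Set.Ico (0 : ℝ) 1,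
      ‖fderiv ℝ f (x + t • h) h - fderiv ℝ f x h‖ ≤ L * ‖h‖ ^ 2 * t := by
    intro t ht
    calc ‖fderiv ℝ f (x + t • h) h - fderiv ℝ f x h‖
        ≤ ‖fderiv ℝ f (x + t • h) - fderiv ℝ f x‖ * ‖h‖ :=
          (fderiv ℝ f (x + t • h) - fderiv ℝ f x).le_opNorm h
      _ ≤ L * ‖t • h‖ * ‖h‖ := by
          gcongr; simpa using hlip (x + t • h) x
      _ = L * ‖h‖ ^ 2 * t := by
          rw [norm_smul, Real.norm_of_nonneg ht.1]; ring
  have key := image_norm_le_of_norm_deriv_right_le_deriv_boundary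
    (fun t _ => (hφ t).continuousAt.continuousWithinAt) (fun t _ => (hφ t).hasDerivWithinAt)
    (by simp [φ]) hB hφ_le (Set.right_mem_Icc.2 zero_le_one)
  simpa [φ] using key

theorem abs_image_add_sub_sub_inner_gradient_le {F : Type*} [NormedAddCommGroup F]
    [InnerProductSpace ℝ F] [CompleteSpace F] {G : F → ℝ} {L : ℝ} (hG : Differentiable ℝ G)
    (hlip : ∀ u v, ‖gradient G u - gradient G v‖ ≤ L * ‖u - v‖) (u h : F) :
    |G (u + h) - G u - ⟪gradient G u, h⟫| ≤ L / 2 * ‖h‖ ^ 2 := by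
  have hlip' : ∀ u v, ‖fderiv ℝ G u - fderiv ℝ G v‖ ≤ L * ‖u - v‖ := fun u v => by
    simpa only [← toDual_gradient, ← map_sub, LinearIsometryEquiv.norm_map] using hlip u v
  simpa only [inner_gradient_left, Real.norm_eq_abs] using
    norm_image_add_sub_sub_fderiv_le hG hlip' u h

theorem abs_image_sub_smul_add_inner_gradient_le {F : Type*} [NormedAddCommGroup F]
    [InnerProductSpace ℝ F] [CompleteSpace F] {G : F → ℝ} {L : ℝ} (hG : Differentiable ℝ G)
    (hlip : ∀ u v, ‖gradient G u - gradient G v‖ ≤ L * ‖u - v‖) (α : ℝ) (u h : F) :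
    |G (u - α • h) - G u + ⟪α • gradient G u, h⟫| ≤ α ^ 2 * L / 2 * ‖h‖ ^ 2 := by
  have := abs_image_add_sub_sub_inner_gradient_le hG hlip u (-(α • h))
  rw [← sub_eq_add_neg, inner_neg_right, sub_neg_eq_add, real_inner_smul_right,
    ← real_inner_smul_left, norm_neg, norm_smul, mul_pow, Real.norm_eq_abs, sq_abs] at this
  exact this.trans_eq (by ring)

theorem condExp_le_neg_inner_condExp_add {Ω F : Type*} [NormedAddCommGroup F]
    [InnerProductSpace ℝ F] [CompleteSpace F] {m m0 : MeasurableSpace Ω} {μ : Measure Ω}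
    (hm : m ≤ m0) {f q : Ω → ℝ} {g d : Ω → F} (hg : StronglyMeasurable[m] g)
    (hf : Integrable f μ) (hd : Integrable d μ) (hq : Integrable q μ)
    (hfgd : ∀ ω, |f ω + ⟪g ω, d ω⟫| ≤ q ω) :
    μ[f|m] ≤ᵐ[μ] fun ω => -⟪g ω, (μ[d|m]) ω⟫ + (μ[q|m]) ω := by
  have hgd : Integrable (fun ω => ⟪g ω, d ω⟫) μ := by
    refine (hf.abs.add hq).mono'
      ((hg.mono hm).aestronglyMeasurable.inner hd.aestronglyMeasurable) (.of_forall fun ω => ?_)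
    calc ‖⟪g ω, d ω⟫‖ = |(f ω + ⟪g ω, d ω⟫) - f ω| := by
          rw [add_sub_cancel_left, Real.norm_eq_abs]
      _ ≤ |f ω + ⟪g ω, d ω⟫| + |f ω| := abs_sub _ _
      _ ≤ |f ω| + q ω := by linarith [hfgd ω]
  have hle : f ≤ᵐ[μ] fun ω => -⟪g ω, d ω⟫ + q ω :=
    .of_forall fun ω => by linarith [le_abs_self (f ω + ⟪g ω, d ω⟫), hfgd ω]
  filter_upwards [condExp_mono (m := m) hf (hgd.neg.add hq) hle, condExp_add hgd.neg hq m,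
    condExp_neg (fun ω => ⟪g ω, d ω⟫) m,
    condExp_bilin_of_stronglyMeasurable_left (innerSL ℝ) hg hgd hd] with ω hmono hadd hneg hpull
  rw [hadd, Pi.add_apply, hneg, Pi.neg_apply] at hmono
  exact hmono.trans_eq (congrArg (-· + _) hpull)

theorem stmt1_general {dim : ℕ} {Ω : Type*} {m0 : MeasurableSpace Ω} {μ : Measure Ω}
    (𝒢 : MeasurableSpace Ω) (h𝒢 : 𝒢 ≤ m0)
    (G : EuclideanSpace ℝ (Fin dim) → ℝ)
    (L μc M MG α : ℝ)
    (w d : Ω → EuclideanSpace ℝ (Fin dim)) (y : Ω → ℕ)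
    (hL : 0 < L) (hMG : 0 < MG)
    (hα : 0 < α) (hα' : α < μc / (L * MG))
    (hGdiff : ContDiff ℝ 1 G)
    (hGlip : ∀ u v, ‖gradient G u - gradient G v‖ ≤ L * ‖u - v‖)
    (hw : StronglyMeasurable[𝒢] w)
    (hd : Integrable d μ)
    (hd2 : Integrable (fun ω => ‖d ω‖ ^ 2) μ)
    (hG1 : Integrable (fun ω => G (w ω - α • d ω)) μ)
    (hG2 : Integrable (fun ω => G (w ω)) μ)
    (hmom1 : ∀ᵐ ω ∂μ,
      ⟪gradient G (w ω), (μ[d | 𝒢]) ω⟫ ≥ μc * ‖gradient G (w ω)‖ ^ 2)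
    (hmom2 : ∀ᵐ ω ∂μ, (μ[fun ω' => ‖d ω'‖ ^ 2 | 𝒢]) ω
      ≤ M / (y ω : ℝ) + MG * ‖gradient G (w ω)‖ ^ 2) :
    ∀ᵐ ω ∂μ, (μ[fun ω' => G (w ω' - α • d ω') - G (w ω') | 𝒢]) ω
      ≤ -(α * μc / 2) * ‖gradient G (w ω)‖ ^ 2 + α ^ 2 * L * M / (2 * (y ω : ℝ)) := by
  have hstep : α * (L * MG) ≤ μc := ((lt_div_iff₀ (by positivity)).1 hα').le
  have hgrad : Continuous (gradient G) :=
    (InnerProductSpace.toDual ℝ _).symm.continuous.comp (hGdiff.continuous_fderiv one_ne_zero)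
  have hscale : μ[fun ω => α ^ 2 * L / 2 * ‖d ω‖ ^ 2 | 𝒢]
      =ᵐ[μ] fun ω => α ^ 2 * L / 2 * μ[fun ω => ‖d ω‖ ^ 2 | 𝒢] ω :=
    condExp_smul (α ^ 2 * L / 2) (fun ω => ‖d ω‖ ^ 2) 𝒢
  filter_upwards [condExp_le_neg_inner_condExp_add h𝒢
      ((hgrad.comp_stronglyMeasurable hw).const_smul α) (hG1.sub hG2) hd (hd2.const_mul _)
      fun ω => abs_image_sub_smul_add_inner_gradient_le (hGdiff.differentiable one_ne_zero)
        hGlip α (w ω) (d ω), hscale, hmom1, hmom2]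
    with ω hdesc hsmul hmom1 hmom2
  rw [Pi.smul_apply, real_inner_smul_left, hsmul] at hdesc
  set N := ‖gradient G (w ω)‖ ^ 2
  calc μ[fun ω' => G (w ω' - α • d ω') - G (w ω') | 𝒢] ω
      ≤ -(α * ⟪gradient G (w ω), μ[d | 𝒢] ω⟫)
          + α ^ 2 * L / 2 * μ[fun ω => ‖d ω‖ ^ 2 | 𝒢] ω := hdesc
    _ ≤ -(α * (μc * N)) + α ^ 2 * L / 2 * (M / y ω + MG * N) := by gcongr
    _ = -(α * μc / 2) * N + α ^ 2 * L * M / (2 * y ω) - α * N / 2 * (μc - α * (L * MG)) := by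
      ring
    _ ≤ -(α * μc / 2) * N + α ^ 2 * L * M / (2 * y ω) :=
      sub_le_self _ (mul_nonneg (by positivity) (sub_nonneg.2 hstep))

/-- One-step expected descent inequality for distributed SGD: if `G` is `L`-Lipschitz
smooth, `w`, `y` are `𝒢`-measurable, the update direction `d` satisfies the first and
second conditional moment bounds, and `0 < α < μ/(L M_G)`, then a.s.
`E[G(w - α d) - G(w) | 𝒢] ≤ -(α μ / 2) ‖∇G(w)‖² + α² L M / (2 y)`. -/
theorem stmt1 {dim : ℕ} {Ω : Type*} {m0 : MeasurableSpace Ω} {μ : Measure Ω}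
    [IsProbabilityMeasure μ]
    (𝒢 : MeasurableSpace Ω) (h𝒢 : 𝒢 ≤ m0)
    (G : EuclideanSpace ℝ (Fin dim) → ℝ)
    (L μc M MG α : ℝ)
    (w d : Ω → EuclideanSpace ℝ (Fin dim)) (y : Ω → ℕ)
    (hL : 0 < L) (hμc : 0 < μc) (hM : 0 ≤ M) (hMG : 0 < MG)
    (hα : 0 < α) (hα' : α < μc / (L * MG))
    (hGdiff : ContDiff ℝ 1 G)
    (hGlip : ∀ u v, ‖gradient G u - gradient G v‖ ≤ L * ‖u - v‖)
    (hw : StronglyMeasurable[𝒢] w)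
    (hy : Measurable[𝒢] y) (hypos : ∀ ω, 0 < y ω)
    (hd : Integrable d μ)
    (hd2 : Integrable (fun ω => ‖d ω‖ ^ 2) μ)
    (hG1 : Integrable (fun ω => G (w ω - α • d ω)) μ)
    (hG2 : Integrable (fun ω => G (w ω)) μ)
    (hmom1 : ∀ᵐ ω ∂μ,
      ⟪gradient G (w ω), (μ[d | 𝒢]) ω⟫ ≥ μc * ‖gradient G (w ω)‖ ^ 2)
    (hmom2 : ∀ᵐ ω ∂μ, (μ[fun ω' => ‖d ω'‖ ^ 2 | 𝒢]) ω
      ≤ M / (y ω : ℝ) + MG * ‖gradient G (w ω)‖ ^ 2) :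
    ∀ᵐ ω ∂μ, (μ[fun ω' => G (w ω' - α • d ω') - G (w ω') | 𝒢]) ω
      ≤ -(α * μc / 2) * ‖gradient G (w ω)‖ ^ 2 + α ^ 2 * L * M / (2 * (y ω : ℝ)) :=
  stmt1_general 𝒢 h𝒢 G L μc M MG α w d y hL hMG hα hα' hGdiff hGlip hw hd hd2 hG1 hG2 hmom1 hmom2
end

section
/- Fix an integer n ≥ 1. For q ∈ (0,1), let y_q be a Binomial(n, 1−q) random variable (each of n workers is independently preempted with probability q, and y_q counts the active workers). Then the map q ↦ E[1/(y_q + 1)] = Σ_{k=0}^{n} (1/(k+1)) · C(n,k) · (1−q)^k · q^{n−k} is strictly increasing on (0,1). -/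
/-!
Since `C(n,k) / (k+1) = C(n+1,k+1) / (n+1)`, multiplying the sum by `1 - q` turns it into the
binomial expansion of `((1 - q) + q)^(n+1)` with its last term `q^(n+1)` removed. Hence
`E[1/(y_q + 1)] = (1 - q^(n+1)) / ((n+1)(1-q)) = (1 + q + ⋯ + q^n) / (n+1)`,
which is strictly increasing in `q ≥ 0` as soon as `n ≥ 1`.
-/

open Finset Set

lemma mul_sum_choose_succ_mul_pow {R : Type*} [CommRing R] (x y : R) (n : ℕ) :
    x * ∑ k ∈ range (n + 1), ((n + 1).choose (k + 1) : R) * x ^ k * y ^ (n - k) =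
      (x + y) ^ (n + 1) - y ^ (n + 1) := by
  rw [add_pow, sum_range_succ' _ (n + 1), mul_sum]
  simp only [Nat.choose_zero_right, pow_zero, Nat.cast_one, mul_one, one_mul, Nat.sub_zero,
    add_sub_cancel_right, Nat.add_sub_add_right]
  exact sum_congr rfl fun k _ => by ring

lemma one_div_succ_mul_choose {K : Type*} [Field K] [CharZero K] (n k : ℕ) :
    1 / (k + 1 : K) * n.choose k = (n + 1).choose (k + 1) / (n + 1) := by
  have h : ((n : K) + 1) * n.choose k = (n + 1).choose (k + 1) * (k + 1) := by
    exact_mod_cast Nat.add_one_mul_choose_eq n k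
  field_simp
  linear_combination h

lemma sum_one_div_succ_mul_binomial_eq_geom_sum {K : Type*} [Field K] [CharZero K] {q : K}
    (hq : q ≠ 1) (n : ℕ) :
    ∑ k ∈ range (n + 1), 1 / (k + 1 : K) * n.choose k * (1 - q) ^ k * q ^ (n - k) =
      (∑ j ∈ range (n + 1), q ^ j) / (n + 1) := by
  have hcoef : ∑ k ∈ range (n + 1), 1 / (k + 1 : K) * n.choose k * (1 - q) ^ k * q ^ (n - k) =
      (∑ k ∈ range (n + 1), ((n + 1).choose (k + 1) : K) * (1 - q) ^ k * q ^ (n - k)) / (n + 1) := by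
    rw [sum_div]
    exact sum_congr rfl fun k _ => by rw [one_div_succ_mul_choose]; ring
  have hbinom := mul_sum_choose_succ_mul_pow (1 - q) q n
  rw [sub_add_cancel, one_pow, ← mul_neg_geom_sum] at hbinom
  rw [hcoef, mul_left_cancel₀ (sub_ne_zero.2 hq.symm) hbinom]

lemma strictMonoOn_geom_sum {R : Type*} [Semiring R] [PartialOrder R] [IsStrictOrderedRing R]
    {n : ℕ} (hn : 2 ≤ n) : StrictMonoOn (fun x : R => ∑ i ∈ range n, x ^ i) (Ici 0) := by
  intro a ha b _ hab
  refine sum_lt_sum (fun i _ => pow_le_pow_left₀ ha hab.le i) ⟨1, mem_range.2 hn, ?_⟩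
  simpa using hab

/-- For `n ≥ 1` workers each independently preempted with probability `q`, the map
`q ↦ E[1/(y_q + 1)] = ∑_{k=0}^n (1/(k+1)) C(n,k) (1-q)^k q^(n-k)` is strictly
increasing on `(0,1)`. -/
theorem stmt4 (n : ℕ) (hn : 1 ≤ n) :
    StrictMonoOn (fun q : ℝ =>
      ∑ k ∈ Finset.range (n + 1),
        (1 / (k + 1 : ℝ)) * (n.choose k : ℝ) * (1 - q) ^ k * q ^ (n - k))
      (Set.Ioo 0 1) := by
  have hgeom : StrictMonoOn (fun q : ℝ => (∑ j ∈ range (n + 1), q ^ j) / (n + 1)) (Ioo 0 1) :=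
    fun a ha b hb hab => div_lt_div_of_pos_right
      (strictMonoOn_geom_sum (by omega) (le_of_lt ha.1) (le_of_lt hb.1) hab) (by positivity)
  exact hgeom.congr fun q hq => (sum_one_div_succ_mul_binomial_eq_geom_sum hq.2.ne n).symm
end

section
/- Let p̲ < p̄ be reals and let F : [p̲, p̄] → [0,1] be a continuous, strictly increasing function with F(p̲) = 0 and F(p̄) = 1, given by F(x) = ∫_{p̲}^{x} f(t) dt for a nonnegative integrable density f. Let r > 0, let J ≥ 1 and n ≥ 1 be integers, and let θ > 0 satisfy J r / θ ≤ 1. For b ∈ (p̲, p̄], define the expected completion time τ(b) = J r / F(b) and the expected cost C(b) = (J n r / F(b)) · ∫_{p̲}^{b} p · f(p) dp. Then b* := F^{-1}(J r / θ) satisfies τ(b*) ≤ θ, and C(b*) ≤ C(b) for every b ∈ (p̲, p̄] with τ(b) ≤ θ. That is, the optimal uniform bid price is b* = F^{-1}(J r / θ). -/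
/-!
The deadline `τ(b) = Jr/F(b) ≤ θ` says `F(b) ≥ Jr/θ = F(b*)`, i.e. `b ≥ b*`. The cost is `Jnr`
times the mean price conditioned on being at most `b`, and this conditional mean is nondecreasing
in `b`, because raising the bid from `x` to `y` only adds prices `≥ x` while the mean so far is
`≤ x`. Hence the smallest feasible bid `b*` is the cheapest.
-/

open MeasureTheory intervalIntegral Set

namespace SpotPrice

variable {f : ℝ → ℝ} {a b x y : ℝ}

lemma intervalIntegrable_of_integrableOn_Icc (hab : a ≤ b) (hfi : IntegrableOn f (Icc a b)) :
    IntervalIntegrable f volume a b :=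
  (intervalIntegrable_iff_integrableOn_Icc_of_le hab).2 hfi

lemma intervalIntegrable_id_mul (hab : a ≤ b) (hfi : IntegrableOn f (Icc a b)) :
    IntervalIntegrable (fun p => p * f p) volume a b :=
  intervalIntegrable_of_integrableOn_Icc hab (hfi.continuousOn_mul continuousOn_id isCompact_Icc)

lemma integral_id_mul_le_mul_integral (hab : a ≤ b) (hf : ∀ p ∈ Icc a b, 0 ≤ f p)
    (hfi : IntegrableOn f (Icc a b)) :
    ∫ p in a..b, p * f p ≤ b * ∫ p in a..b, f p := by
  rw [← intervalIntegral.integral_const_mul]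
  exact integral_mono_on hab (intervalIntegrable_id_mul hab hfi)
    ((intervalIntegrable_of_integrableOn_Icc hab hfi).const_mul b)
    fun p hp => mul_le_mul_of_nonneg_right hp.2 (hf p hp)

lemma mul_integral_le_integral_id_mul (hab : a ≤ b) (hf : ∀ p ∈ Icc a b, 0 ≤ f p)
    (hfi : IntegrableOn f (Icc a b)) :
    a * ∫ p in a..b, f p ≤ ∫ p in a..b, p * f p := by
  rw [← intervalIntegral.integral_const_mul]
  exact integral_mono_on hab ((intervalIntegrable_of_integrableOn_Icc hab hfi).const_mul a)
    (intervalIntegrable_id_mul hab hfi)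
    fun p hp => mul_le_mul_of_nonneg_right hp.1 (hf p hp)

/-- For the density `f` of a price with lower end `a`, the expected price conditioned on being
at most `x`. -/
noncomputable def partialMean (f : ℝ → ℝ) (a x : ℝ) : ℝ :=
  (∫ p in a..x, p * f p) / ∫ p in a..x, f p

theorem partialMean_le_partialMean (hax : a ≤ x) (hxy : x ≤ y) (hf : ∀ p ∈ Icc a y, 0 ≤ f p)
    (hfi : IntegrableOn f (Icc a y)) (hpos : 0 < ∫ p in a..x, f p) :
    partialMean f a x ≤ partialMean f a y := by
  have hf_ax : ∀ p ∈ Icc a x, 0 ≤ f p := fun p hp => hf p ⟨hp.1, hp.2.trans hxy⟩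
  have hf_xy : ∀ p ∈ Icc x y, 0 ≤ f p := fun p hp => hf p ⟨hax.trans hp.1, hp.2⟩
  have hfi_ax : IntegrableOn f (Icc a x) := hfi.mono_set (Icc_subset_Icc le_rfl hxy)
  have hfi_xy : IntegrableOn f (Icc x y) := hfi.mono_set (Icc_subset_Icc hax le_rfl)
  set M := ∫ p in a..x, f p
  set D := ∫ p in x..y, f p
  set A := ∫ p in a..x, p * f p
  set B := ∫ p in x..y, p * f p
  have hA : A ≤ x * M := integral_id_mul_le_mul_integral hax hf_ax hfi_ax
  have hB : x * D ≤ B := mul_integral_le_integral_id_mul hxy hf_xy hfi_xy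
  have hD : 0 ≤ D := integral_nonneg hxy hf_xy
  have hM : ∫ p in a..y, f p = M + D := (integral_add_adjacent_intervals
    (intervalIntegrable_of_integrableOn_Icc hax hfi_ax)
    (intervalIntegrable_of_integrableOn_Icc hxy hfi_xy)).symm
  have hAB : ∫ p in a..y, p * f p = A + B := (integral_add_adjacent_intervals
    (intervalIntegrable_id_mul hax hfi_ax) (intervalIntegrable_id_mul hxy hfi_xy)).symm
  rw [partialMean, partialMean, hM, hAB, div_le_div_iff₀ hpos (by positivity)]
  calc A * (M + D) = A * M + A * D := mul_add A M D
    _ ≤ A * M + x * M * D := by gcongr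
    _ = A * M + x * D * M := by ring
    _ ≤ A * M + B * M := by gcongr
    _ = (A + B) * M := (add_mul A B M).symm

end SpotPrice

open SpotPrice

theorem stmt11_general (pl pu : ℝ)
    (f F : ℝ → ℝ)
    (hf : ∀ x ∈ Set.Icc pl pu, 0 ≤ f x)
    (hfi : IntegrableOn f (Set.Icc pl pu))
    (hF : ∀ x, F x = ∫ t in pl..x, f t)
    (hFm : StrictMonoOn F (Set.Icc pl pu))
    (r : ℝ) (J n : ℕ)
    (θ : ℝ) (hθ : 0 < θ)
    (bstar : ℝ) (hbstar : bstar ∈ Set.Ioc pl pu)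
    (hbF : F bstar = (J : ℝ) * r / θ) :
    (J : ℝ) * r / F bstar ≤ θ ∧
    ∀ b ∈ Set.Ioc pl pu, (J : ℝ) * r / F b ≤ θ →
      ((J : ℝ) * n * r / F bstar) * ∫ p in pl..bstar, p * f p
        ≤ ((J : ℝ) * n * r / F b) * ∫ p in pl..b, p * f p := by
  have hF0 : F pl = 0 := by rw [hF, intervalIntegral.integral_same]
  have hFpos : ∀ b ∈ Ioc pl pu, 0 < F b := fun b hb => by
    simpa [hF0] using hFm (left_mem_Icc.2 (hb.1.trans_le hb.2).le) (Ioc_subset_Icc_self hb) hb.1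
  have hJr : 0 < (J : ℝ) * r := by
    have := hFpos bstar hbstar
    rwa [hbF, div_pos_iff_of_pos_right hθ] at this
  refine ⟨by rw [hbF, div_div_cancel₀ hJr.ne'], fun b hb hτ => ?_⟩
  have hFle : F bstar ≤ F b := by
    rw [hbF, div_le_iff₀ hθ]
    rw [div_le_iff₀ (hFpos b hb)] at hτ
    linarith
  have hble : bstar ≤ b :=
    (hFm.le_iff_le (Ioc_subset_Icc_self hbstar) (Ioc_subset_Icc_self hb)).1 hFle
  have hmean := partialMean_le_partialMean hbstar.1.le hble
    (fun p hp => hf p ⟨hp.1, hp.2.trans hb.2⟩) (hfi.mono_set (Icc_subset_Icc le_rfl hb.2))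
    (by rw [← hF]; exact hFpos bstar hbstar)
  rw [partialMean, partialMean, ← hF, ← hF] at hmean
  rw [div_mul_eq_mul_div, div_mul_eq_mul_div, mul_div_assoc, mul_div_assoc]
  have hJnr : 0 ≤ (J : ℝ) * n * r := by
    rw [mul_right_comm]
    exact mul_nonneg hJr.le n.cast_nonneg
  exact mul_le_mul_of_nonneg_left hmean hJnr

/-- Optimal uniform bid (Theorem 2): with CDF `F` of the spot price on `[p̲, p̄]`,
expected per-iteration runtime `r`, `J` iterations, `n` workers and deadline `θ`,
the bid `b* = F⁻¹(Jr/θ)` meets the deadline `τ(b*) = Jr/F(b*) ≤ θ` and minimizes the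
expected cost `C(b) = (Jnr/F(b)) ∫_{p̲}^b p f(p) dp` among deadline-feasible bids. -/
theorem stmt11 (pl pu : ℝ) (hpp : pl < pu)
    (f F : ℝ → ℝ)
    (hf : ∀ x ∈ Set.Icc pl pu, 0 ≤ f x)
    (hfi : IntegrableOn f (Set.Icc pl pu))
    (hF : ∀ x, F x = ∫ t in pl..x, f t)
    (hFc : ContinuousOn F (Set.Icc pl pu))
    (hFm : StrictMonoOn F (Set.Icc pl pu))
    (hF0 : F pl = 0) (hF1 : F pu = 1)
    (r : ℝ) (hr : 0 < r) (J n : ℕ) (hJ : 1 ≤ J) (hn : 1 ≤ n)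
    (θ : ℝ) (hθ : 0 < θ) (hfeas : (J : ℝ) * r / θ ≤ 1)
    (bstar : ℝ) (hbstar : bstar ∈ Set.Ioc pl pu)
    (hbF : F bstar = (J : ℝ) * r / θ) :
    (J : ℝ) * r / F bstar ≤ θ ∧
    ∀ b ∈ Set.Ioc pl pu, (J : ℝ) * r / F b ≤ θ →
      ((J : ℝ) * n * r / F bstar) * ∫ p in pl..bstar, p * f p
        ≤ ((J : ℝ) * n * r / F b) * ∫ p in pl..b, p * f p :=
  stmt11_general pl pu f F hf hfi hF hFm r J n θ hθ bstar hbstar hbF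
end

section
/- Let β ∈ (0,1), A, B, n₀ > 0, χ > 0 and η > 1 with η^χ > 1/β, and set x = 1/(β·η^χ) ∈ (0,1). Define the static error bound S(J) = A·β^J + (B/n₀^χ)·(1 − β^J)/(1 − β) for J ∈ ℕ, and the dynamic error bound D(J') = A·β^{J'} + (B/n₀^χ)·β^{J'−1}·(1 − x^{J'})/(1 − x) for J' ∈ ℕ. Then there exists J₀ such that for all integers J ≥ J₀, setting J'(J) = ⌈ log(1 + (η−1)·J) / (χ·log η) ⌉, one has D(J'(J)) ≤ S(J). That is, provisioning n₀·η^{j−1} workers in iteration j and running only ⌈log_{η^χ}(1 + (η−1)J)⌉ iterations achieves an error bound no larger than provisioning n₀ workers for J iterations, for all sufficiently large J. -/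
open Filter Topology

/-!
The static bound `S J` tends to `(B / n₀ ^ χ) / (1 - β) > 0`, while the dynamic bound `D J'`
tends to `0` because `β < 1` and `x < 1`. Since the number of dynamic iterations
`⌈log (1 + (η - 1) J) / (χ log η)⌉` still tends to infinity with `J`, eventually `D` of it lies
below `S J`.
-/

theorem tendsto_static_bound {β : ℝ} (hβ₀ : 0 ≤ β) (hβ₁ : β < 1) (A c : ℝ) :
    Tendsto (fun J : ℕ => A * β ^ J + c * (1 - β ^ J) / (1 - β)) atTop (𝓝 (c / (1 - β))) := by
  have hpow := tendsto_pow_atTop_nhds_zero_of_lt_one hβ₀ hβ₁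
  simpa using ((hpow.const_mul A).add (((hpow.const_sub 1).const_mul c).div_const (1 - β)))

theorem tendsto_dynamic_bound {β x : ℝ} (hβ₀ : 0 ≤ β) (hβ₁ : β < 1) (hx₀ : 0 ≤ x) (hx₁ : x < 1)
    (A c : ℝ) :
    Tendsto (fun J : ℕ => A * β ^ J + c * β ^ (J - 1) * (1 - x ^ J) / (1 - x)) atTop (𝓝 0) := by
  have hβpow := tendsto_pow_atTop_nhds_zero_of_lt_one hβ₀ hβ₁
  have hβpow' := hβpow.comp (tendsto_sub_atTop_nat 1)
  have hxpow := tendsto_pow_atTop_nhds_zero_of_lt_one hx₀ hx₁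
  simpa using (hβpow.const_mul A).add
    (((hβpow'.const_mul c).mul (hxpow.const_sub 1)).div_const (1 - x))

theorem tendsto_natCeil_log_one_add_mul_div {a b : ℝ} (ha : 0 < a) (hb : 0 < b) :
    Tendsto (fun J : ℕ => ⌈Real.log (1 + a * J) / b⌉₊) atTop atTop := by
  have hlin : Tendsto (fun J : ℕ => 1 + a * J) atTop atTop :=
    tendsto_atTop_add_const_left _ 1 (tendsto_natCast_atTop_atTop.const_mul_atTop ha)
  exact tendsto_nat_ceil_atTop.comp
    ((Real.tendsto_log_atTop.comp hlin).atTop_div_const hb)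

theorem stmt17_general (β A B n₀ χ η : ℝ)
    (hβ : β ∈ Set.Ioo (0 : ℝ) 1) (hB : 0 < B) (hn₀ : 0 < n₀)
    (hχ : 0 < χ) (hη : 1 < η) (hηβ : η ^ χ > 1 / β)
    (x : ℝ) (hx : x = 1 / (β * η ^ χ))
    (S D : ℕ → ℝ)
    (hS : ∀ J : ℕ, S J = A * β ^ J + (B / n₀ ^ χ) * (1 - β ^ J) / (1 - β))
    (hD : ∀ J' : ℕ, D J' = A * β ^ J'
      + (B / n₀ ^ χ) * β ^ (J' - 1) * (1 - x ^ J') / (1 - x)) :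
    ∃ J₀ : ℕ, ∀ J : ℕ, J₀ ≤ J →
      D ⌈Real.log (1 + (η - 1) * J) / (χ * Real.log η)⌉₊ ≤ S J := by
  obtain ⟨hβ₀, hβ₁⟩ := hβ
  have hx₀ : 0 ≤ x := by rw [hx]; positivity
  have hx₁ : x < 1 := by
    rw [hx, div_lt_one (by positivity)]
    rwa [gt_iff_lt, div_lt_iff₀ hβ₀, mul_comm] at hηβ
  have hSlim : Tendsto S atTop (𝓝 ((B / n₀ ^ χ) / (1 - β))) := by
    simpa only [← funext hS] using tendsto_static_bound hβ₀.le hβ₁ A (B / n₀ ^ χ)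
  have hDlim : Tendsto (fun J : ℕ => D ⌈Real.log (1 + (η - 1) * J) / (χ * Real.log η)⌉₊)
      atTop (𝓝 0) := by
    have hD' := tendsto_dynamic_bound hβ₀.le hβ₁ hx₀ hx₁ A (B / n₀ ^ χ)
    rw [← funext hD] at hD'
    exact hD'.comp (tendsto_natCeil_log_one_add_mul_div (sub_pos.2 hη)
      (mul_pos hχ (Real.log_pos hη)))
  have hlim_pos : (0 : ℝ) < (B / n₀ ^ χ) / (1 - β) := by
    have := sub_pos.2 hβ₁
    positivity
  obtain ⟨J₀, hJ₀⟩ := eventually_atTop.1 (hDlim.eventually_lt hSlim hlim_pos)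
  exact ⟨J₀, fun J hJ => (hJ₀ J hJ).le⟩

/-- Theorem 5 (dynamic workers): with static error bound
`S(J) = A β^J + (B/n₀^χ)(1-β^J)/(1-β)` and dynamic error bound
`D(J') = A β^J' + (B/n₀^χ) β^(J'-1) (1-x^J')/(1-x)`, `x = 1/(β η^χ) ∈ (0,1)`,
for all sufficiently large `J`, running `J'(J) = ⌈log(1+(η-1)J)/(χ log η)⌉` iterations
with geometrically growing workers gives `D(J'(J)) ≤ S(J)`. -/
theorem stmt17 (β A B n₀ χ η : ℝ)
    (hβ : β ∈ Set.Ioo (0 : ℝ) 1) (hA : 0 < A) (hB : 0 < B) (hn₀ : 0 < n₀)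
    (hχ : 0 < χ) (hη : 1 < η) (hηβ : η ^ χ > 1 / β)
    (x : ℝ) (hx : x = 1 / (β * η ^ χ))
    (S D : ℕ → ℝ)
    (hS : ∀ J : ℕ, S J = A * β ^ J + (B / n₀ ^ χ) * (1 - β ^ J) / (1 - β))
    (hD : ∀ J' : ℕ, D J' = A * β ^ J'
      + (B / n₀ ^ χ) * β ^ (J' - 1) * (1 - x ^ J') / (1 - x)) :
    ∃ J₀ : ℕ, ∀ J : ℕ, J₀ ≤ J →
      D ⌈Real.log (1 + (η - 1) * J) / (χ * Real.log η)⌉₊ ≤ S J :=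
  stmt17_general β A B n₀ χ η hβ hB hn₀ hχ hη hηβ x hx S D hS hD
end
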